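/- Let G satisfy (G1)–(G3) and let t^{ab} be Hermitian positive definite. Then (G6) holds: conj(w_{ma}^A) t^{mn} G^{ab}{}_{AB} w_{nb}^B ≥ 0 for every w with w_{ab}^{&A} = 0 and conj(ε^{ab} w_{ab}^A) = ε^{ab} w_{ab}^{♯A}, with equality if and only if w ∈ Weyl, i.e. Π_{ab}^{Acd}{}_B w_{cd}^B = w_{ab}^A (and w^{&}=0). -/

import Mathlib

/-- The antisymmetric epsilon symbol on `{0,1}` with `ε 0 1 = 1`. -/
def eps (a b : Fin 2) : ℂ := if a < b then 1 else if b < a then -1 else 0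

/-- The Kronecker delta. -/
def kdelta (a b : Fin 2) : ℂ := if a = b then 1 else 0

/-- Capital index type: four coordinate indices plus quadruple spinor indices. -/
abbrev Idx : Type := Fin 4 ⊕ (Fin 2 × Fin 2 × Fin 2 × Fin 2)

/-- Total symmetrizer of `k` spinor indices. -/
noncomputable def symk {k : ℕ} (up lo : Fin k → Fin 2) : ℂ :=
  (Nat.factorial k : ℂ)⁻¹ * ∑ π : Equiv.Perm (Fin k), ∏ i, kdelta (up i) (lo (π i))

/-- The projection `Π_{a₁…a_k}^{A b₁…b_k}{}_B`: zero if `A` or `B` is a coordinate index,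
and otherwise given by
`Π_{a₁…a_k c₁c₂}^{c₃c₄ b₁…b_k d₁d₂}{}_{d₃d₄}
  = δ_{c₁}^{d₁} δ^{c₃}_{d₃} ε^{c₄e} ε_{d₄f} S^{b₁…b_k d₂ f}_{a₁…a_k c₂ e}`. -/
noncomputable def PiProj {k : ℕ} (lo up : Fin k → Fin 2) (A B : Idx) : ℂ :=
  match A, B with
  | Sum.inr (c1, c2, c3, c4), Sum.inr (d1, d2, d3, d4) =>
      kdelta c1 d1 * kdelta c3 d3 *
        ∑ e : Fin 2, ∑ f : Fin 2, eps c4 e * eps d4 f *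
          symk (Fin.snoc (Fin.snoc up d2) f) (Fin.snoc (Fin.snoc lo c2) e)
  | _, _ => 0

/-- The `♯` operation: swap the order within each spinor index pair. -/
def sharp : Idx → Idx
  | Sum.inl α => Sum.inl α
  | Sum.inr (i, j, k, l) => Sum.inr (j, i, l, k)

/-- The `&` prefix: `f^{&A} = Π^A{}_B Π^{♯B}{}_{♯C} f^C`. -/
noncomputable def amp (f : Idx → ℂ) (A : Idx) : ℂ :=
  ∑ B : Idx, ∑ C : Idx,
    PiProj (k := 0) ![] ![] A B * PiProj (k := 0) ![] ![] (sharp B) (sharp C) * f C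


set_option maxHeartbeats 2000000

lemma symk_lo_perm {k : ℕ} (up lo : Fin k → Fin 2) (σ : Equiv.Perm (Fin k)) :
    symk up (lo ∘ σ) = symk up lo := by
  unfold symk
  congr 1
  exact Fintype.sum_equiv (Equiv.mulLeft σ) _ _ (by intro π; simp [Equiv.Perm.mul_apply])

lemma symk_up_perm {k : ℕ} (up lo : Fin k → Fin 2) (σ : Equiv.Perm (Fin k)) :
    symk (up ∘ σ) lo = symk up lo := by
  unfold symk
  congr 1
  refine Fintype.sum_equiv (Equiv.mulRight σ⁻¹) _ _ ?_
  intro π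
  refine Fintype.prod_equiv σ _ _ ?_
  intro i
  simp [Equiv.Perm.mul_apply]

lemma symk_sum_up {k : ℕ} (lo : Fin k → Fin 2) :
    ∑ up : Fin k → Fin 2, symk up lo = 1 := by
  unfold symk
  rw [← Finset.mul_sum, Finset.sum_comm]
  have h : ∀ π : Equiv.Perm (Fin k), (∑ up : Fin k → Fin 2, ∏ i, kdelta (up i) (lo (π i))) = 1 := by
    intro π
    rw [Finset.sum_eq_single (fun i => lo (π i))]
    · simp [kdelta]
    · intro up _ hne
      obtain ⟨i, hi⟩ := Function.ne_iff.mp hne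
      exact Finset.prod_eq_zero (Finset.mem_univ i) (by simp [kdelta, hi])
    · simp
  simp only [h]
  rw [Finset.sum_const, Finset.card_univ, Fintype.card_perm, Fintype.card_fin]
  simp [mul_comm, Nat.factorial_ne_zero]

lemma symk_symm {k : ℕ} (up lo : Fin k → Fin 2) : symk up lo = symk lo up := by
  unfold symk
  congr 1
  refine Fintype.sum_equiv (Equiv.inv _) _ _ ?_
  intro π
  refine Fintype.prod_equiv π _ _ ?_
  intro i
  simp [kdelta, eq_comm]

lemma symk_sum_lo {k : ℕ} (up : Fin k → Fin 2) :
    ∑ lo : Fin k → Fin 2, symk up lo = 1 := by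
  simp only [symk_symm up]
  exact symk_sum_up up

-- L4
lemma symk_ne_zero {k : ℕ} (up lo : Fin k → Fin 2) (h : symk up lo ≠ 0) :
    ∃ π : Equiv.Perm (Fin k), ∀ i, up i = lo (π i) := by
  by_contra hc
  push_neg at hc
  apply h
  unfold symk
  rw [Finset.sum_eq_zero, mul_zero]
  intro π _
  obtain ⟨i, hi⟩ := hc π
  exact Finset.prod_eq_zero (Finset.mem_univ i) (by simp [kdelta, hi])

-- L5: counts
def cnt {k : ℕ} (up : Fin k → Fin 2) : ℕ := (Finset.univ.filter (fun i => up i = 0)).card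

lemma cnt_comp_perm {k : ℕ} (lo : Fin k → Fin 2) (π : Equiv.Perm (Fin k)) :
    cnt (fun i => lo (π i)) = cnt lo := by
  unfold cnt
  apply Finset.card_bij (fun i _ => π i)
  · intro a ha; simp at ha ⊢; exact ha
  · intro a _ b _ hab; exact π.injective hab
  · intro b hb; exact ⟨π⁻¹ b, by simp at hb ⊢; exact hb, by simp⟩

lemma cnt_eq_of_symk_ne_zero {k : ℕ} (up lo : Fin k → Fin 2) (h : symk up lo ≠ 0) :
    cnt up = cnt lo := by
  obtain ⟨π, hπ⟩ := symk_ne_zero up lo h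
  have : up = fun i => lo (π i) := funext hπ
  rw [this, cnt_comp_perm]
-- snoc lemmas
lemma snoc0 (a b : Fin 2) : Fin.snoc (Fin.snoc (![] : Fin 0 → Fin 2) a) b = ![a, b] := by
  funext i
  fin_cases i <;> simp [Fin.snoc]
lemma snoc1 (x a b : Fin 2) : Fin.snoc (Fin.snoc ![x] a) b = ![x, a, b] := by
  funext i
  fin_cases i <;> simp [Fin.snoc]
lemma snoc2 (x y a b : Fin 2) : Fin.snoc (Fin.snoc ![x, y] a) b = ![x, y, a, b] := by
  funext i
  fin_cases i <;> simp [Fin.snoc] <;> rfl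

-- eps lemmas
def bar (x : Fin 2) : Fin 2 := if x = 0 then 1 else 0
noncomputable def sg (x : Fin 2) : ℂ := if x = 0 then 1 else -1

lemma eps_eval (c e : Fin 2) : eps c e = sg c * kdelta e (bar c) := by
  fin_cases c <;> fin_cases e <;> simp [eps, sg, kdelta, bar]

lemma sum_eps (c : Fin 2) (g : Fin 2 → ℂ) : ∑ e, eps c e * g e = sg c * g (bar c) := by
  fin_cases c <;> simp [Fin.sum_univ_two, eps, sg, bar]

lemma sum_eps' (f : Fin 2) (g : Fin 2 → ℂ) : ∑ d, eps d f * g d = - sg f * g (bar f) := by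
  fin_cases f <;> simp [Fin.sum_univ_two, eps, sg, bar]

lemma sum_kdelta (c : Fin 2) (g : Fin 2 → ℂ) : ∑ d, kdelta c d * g d = g c := by
  fin_cases c <;> simp [Fin.sum_univ_two, kdelta]

lemma bar_bar (x : Fin 2) : bar (bar x) = x := by fin_cases x <;> simp [bar]
lemma sg_mul_sg (x : Fin 2) : sg x * sg x = 1 := by fin_cases x <;> simp [sg]
lemma sg_bar (x : Fin 2) : sg (bar x) = - sg x := by fin_cases x <;> simp [bar, sg]

-- Idx sum decomposition
lemma idx_sum (g : Idx → ℂ) :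
    ∑ B : Idx, g B = (∑ α : Fin 4, g (Sum.inl α)) +
      ∑ d1 : Fin 2, ∑ d2 : Fin 2, ∑ d3 : Fin 2, ∑ d4 : Fin 2, g (Sum.inr (d1, d2, d3, d4)) := by
  rw [Fintype.sum_sum_type]
  congr 1
  rw [Fintype.sum_prod_type, Finset.sum_congr rfl]
  intro d1 _
  rw [Fintype.sum_prod_type, Finset.sum_congr rfl]
  intro d2 _
  rw [Fintype.sum_prod_type]

lemma PiProj_inl_right {k : ℕ} (lo up : Fin k → Fin 2) (A : Idx) (α : Fin 4) :
    PiProj lo up A (Sum.inl α) = 0 := by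
  cases A <;> rfl

lemma PiProj_inl_left {k : ℕ} (lo up : Fin k → Fin 2) (B : Idx) (α : Fin 4) :
    PiProj lo up (Sum.inl α) B = 0 := by
  cases B <;> rfl

lemma PiProj_inr {k : ℕ} (lo up : Fin k → Fin 2) (c1 c2 c3 c4 d1 d2 d3 d4 : Fin 2) :
    PiProj lo up (Sum.inr (c1,c2,c3,c4)) (Sum.inr (d1,d2,d3,d4)) =
      kdelta c1 d1 * kdelta c3 d3 *
        ∑ e : Fin 2, ∑ f : Fin 2, eps c4 e * eps d4 f *
          symk (Fin.snoc (Fin.snoc up d2) f) (Fin.snoc (Fin.snoc lo c2) e) := rfl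

-- the key contraction lemma
lemma PiProj_contract {k : ℕ} (lo up : Fin k → Fin 2) (c1 c2 c3 c4 : Fin 2) (v : Idx → ℂ) :
    ∑ B : Idx, PiProj lo up (Sum.inr (c1,c2,c3,c4)) B * v B
    = sg c4 * ∑ d2 : Fin 2, ∑ f : Fin 2,
        (- sg f) * symk (Fin.snoc (Fin.snoc up d2) f) (Fin.snoc (Fin.snoc lo c2) (bar c4))
          * v (Sum.inr (c1, d2, c3, bar f)) := by
  rw [idx_sum]
  simp only [PiProj_inl_right, zero_mul, Finset.sum_const_zero, zero_add]
  simp only [PiProj_inr]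
  fin_cases c1 <;> fin_cases c3 <;> fin_cases c4 <;>
    simp [Fin.sum_univ_two, eps, kdelta, sg, bar] <;> ring

lemma sum_fun3 (g : (Fin 3 → Fin 2) → ℂ) :
    ∑ u : Fin 3 → Fin 2, g u = ∑ p : Fin 2, ∑ q : Fin 2, ∑ r : Fin 2, g ![p, q, r] := by
  rw [← (Fin.consEquiv (fun _ : Fin 3 => Fin 2)).sum_comp]
  rw [Fintype.sum_prod_type]
  apply Finset.sum_congr rfl; intro p _
  rw [← (Fin.consEquiv (fun _ : Fin 2 => Fin 2)).sum_comp, Fintype.sum_prod_type]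
  apply Finset.sum_congr rfl; intro q _
  rw [← (Fin.consEquiv (fun _ : Fin 1 => Fin 2)).sum_comp, Fintype.sum_prod_type]
  apply Finset.sum_congr rfl; intro r _
  rw [Fintype.sum_subsingleton _ (![] : Fin 0 → Fin 2)]
  congr 1

lemma sum_fun4 (g : (Fin 4 → Fin 2) → ℂ) :
    ∑ u : Fin 4 → Fin 2, g u
      = ∑ p : Fin 2, ∑ q : Fin 2, ∑ r : Fin 2, ∑ s : Fin 2, g ![p, q, r, s] := by
  rw [← (Fin.consEquiv (fun _ : Fin 4 => Fin 2)).sum_comp, Fintype.sum_prod_type]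
  apply Finset.sum_congr rfl; intro p _
  have : ∑ y : Fin 3 → Fin 2, g ((Fin.consEquiv (fun _ : Fin 4 => Fin 2)) (p, y))
      = ∑ y : Fin 3 → Fin 2, g (Fin.cons p y) := by
    apply Finset.sum_congr rfl
    intro y _
    congr 1

  rw [this, sum_fun3 (fun u => g (Fin.cons p u))]
  apply Finset.sum_congr rfl; intro q _
  apply Finset.sum_congr rfl; intro r _
  apply Finset.sum_congr rfl; intro s _
  show g (Fin.cons p ![q, r, s]) = g ![p, q, r, s]
  rfl

lemma eta4 (u : Fin 4 → Fin 2) : ![u 0, u 1, u 2, u 3] = u := by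
  funext i; fin_cases i <;> rfl
lemma eta3 (u : Fin 3 → Fin 2) : ![u 0, u 1, u 2] = u := by
  funext i; fin_cases i <;> rfl

lemma cnt_cons (n p q r : Fin 2) :
    cnt ![n, p, q, r] = (if n = 0 then 1 else 0) + cnt ![p, q, r] := by
  revert n p q r; decide

lemma canonCC (W : Fin 2 → Fin 2 → Fin 2 → Fin 2 → ℂ)
    (s12 : ∀ a b x y, W a b x y = W b a x y)
    (s23 : ∀ a b x y, W a b x y = W a x b y)
    (s34 : ∀ a b x y, W a b x y = W a b y x) :
    ∀ a b x y a' b' x' y', cnt ![a,b,x,y] = cnt ![a',b',x',y'] → W a b x y = W a' b' x' y' := by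
  set V : ℕ → ℂ := fun c => if c = 0 then W 1 1 1 1 else if c = 1 then W 0 1 1 1
    else if c = 2 then W 0 0 1 1 else if c = 3 then W 0 0 0 1 else W 0 0 0 0 with hV
  have hcanon : ∀ a b x y, W a b x y = V (cnt ![a,b,x,y]) := by
    have h2v : ∀ v : Fin 2, v = 0 ∨ v = 1 := by decide
    intro a b x y
    rcases h2v a with rfl | rfl <;> rcases h2v b with rfl | rfl <;>
      rcases h2v x with rfl | rfl <;> rcases h2v y with rfl | rfl
    · rw [show cnt ![(0:Fin 2),0,0,0] = 4 by decide]; rfl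
    · rw [show cnt ![(0:Fin 2),0,0,1] = 3 by decide]; rfl
    · rw [show cnt ![(0:Fin 2),0,1,0] = 3 by decide]; rw [s34]; rfl
    · rw [show cnt ![(0:Fin 2),0,1,1] = 2 by decide]; rfl
    · rw [show cnt ![(0:Fin 2),1,0,0] = 3 by decide]; rw [s23, s34]; rfl
    · rw [show cnt ![(0:Fin 2),1,0,1] = 2 by decide]; rw [s23]; rfl
    · rw [show cnt ![(0:Fin 2),1,1,0] = 2 by decide]; rw [s34, s23]; rfl
    · rw [show cnt ![(0:Fin 2),1,1,1] = 1 by decide]; rfl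
    · rw [show cnt ![(1:Fin 2),0,0,0] = 3 by decide]; rw [s12, s23, s34]; rfl
    · rw [show cnt ![(1:Fin 2),0,0,1] = 2 by decide]; rw [s12, s23]; rfl
    · rw [show cnt ![(1:Fin 2),0,1,0] = 2 by decide]; rw [s12, s34, s23]; rfl
    · rw [show cnt ![(1:Fin 2),0,1,1] = 1 by decide]; rw [s12]; rfl
    · rw [show cnt ![(1:Fin 2),1,0,0] = 2 by decide]; rw [s23, s12, s34, s23]; rfl
    · rw [show cnt ![(1:Fin 2),1,0,1] = 1 by decide]; rw [s23, s12]; rfl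
    · rw [show cnt ![(1:Fin 2),1,1,0] = 1 by decide]; rw [s34, s23, s12]; rfl
    · rw [show cnt ![(1:Fin 2),1,1,1] = 0 by decide]; rfl
  intro a b x y a' b' x' y' h
  rw [hcanon a b x y, hcanon a' b' x' y', h]

lemma core4 (W : Fin 2 → Fin 2 → Fin 2 → Fin 2 → ℂ)
    (h1 : ∀ n a x y, (∑ b : Fin 2, ∑ z : Fin 2, ∑ f : Fin 2,
        symk ![b,z,f] ![a,x,y] * W n b z f) = W n a x y)
    (h2 : ∀ x y, W 0 1 x y = W 1 0 x y) :
    ∀ a b x y, (∑ p : Fin 2, ∑ q : Fin 2, ∑ z : Fin 2, ∑ f : Fin 2,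
        symk ![p,q,z,f] ![a,b,x,y] * W p q z f) = W a b x y := by
  have key3 : ∀ (n a x y : Fin 2) (σ : Equiv.Perm (Fin 3)) (a' x' y' : Fin 2),
      (![a',x',y'] = ![a,x,y] ∘ σ) → W n a' x' y' = W n a x y := by
    intro n a x y σ a' x' y' hσ
    rw [← h1 n a' x' y', ← h1 n a x y]
    apply Finset.sum_congr rfl; intro b _
    apply Finset.sum_congr rfl; intro z _
    apply Finset.sum_congr rfl; intro f _
    rw [hσ, symk_lo_perm]
  have s23 : ∀ n a x y, W n a x y = W n x a y := by
    intro n a x y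
    exact (key3 n a x y (Equiv.swap 0 1) x a y
      (by funext i; fin_cases i <;> simp [Equiv.swap_apply_def])).symm
  have s34 : ∀ n a x y, W n a x y = W n a y x := by
    intro n a x y
    exact (key3 n a x y (Equiv.swap 1 2) a y x
      (by funext i; fin_cases i <;> simp [Equiv.swap_apply_def])).symm
  have s12 : ∀ a b x y, W a b x y = W b a x y := by
    have h2v : ∀ v : Fin 2, v = 0 ∨ v = 1 := by decide
    intro a b x y
    rcases h2v a with rfl | rfl <;> rcases h2v b with rfl | rfl
    · rfl
    · exact h2 x y
    · exact (h2 x y).symm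
    · rfl
  have CC := canonCC W s12 s23 s34
  intro a b x y
  have hLHS : (∑ p : Fin 2, ∑ q : Fin 2, ∑ z : Fin 2, ∑ f : Fin 2,
        symk ![p,q,z,f] ![a,b,x,y] * W p q z f)
      = ∑ u : Fin 4 → Fin 2, symk u ![a,b,x,y] * W (u 0) (u 1) (u 2) (u 3) := by
    rw [sum_fun4 (fun u => symk u ![a,b,x,y] * W (u 0) (u 1) (u 2) (u 3))]
    rfl
  rw [hLHS]
  have : ∀ u : Fin 4 → Fin 2, symk u ![a,b,x,y] * W (u 0) (u 1) (u 2) (u 3)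
      = symk u ![a,b,x,y] * W a b x y := by
    intro u
    by_cases h0 : symk u ![a,b,x,y] = 0
    · rw [h0, zero_mul, zero_mul]
    · congr 1
      apply CC
      rw [show cnt ![u 0, u 1, u 2, u 3] = cnt u from by rw [eta4]]
      exact cnt_eq_of_symk_ne_zero _ _ h0
  rw [Finset.sum_congr rfl (fun u _ => this u), ← Finset.sum_mul, symk_sum_up, one_mul]

lemma core4' (W : Fin 2 → Fin 2 → Fin 2 → Fin 2 → ℂ)
    (hS : ∀ a b x y, (∑ p : Fin 2, ∑ q : Fin 2, ∑ z : Fin 2, ∑ f : Fin 2,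
        symk ![p,q,z,f] ![a,b,x,y] * W p q z f) = W a b x y) :
    ∀ n a x y, (∑ b : Fin 2, ∑ z : Fin 2, ∑ f : Fin 2,
        symk ![b,z,f] ![a,x,y] * W n b z f) = W n a x y := by
  have key4 : ∀ (a b x y : Fin 2) (σ : Equiv.Perm (Fin 4)) (a' b' x' y' : Fin 2),
      (![a',b',x',y'] = ![a,b,x,y] ∘ σ) → W a' b' x' y' = W a b x y := by
    intro a b x y σ a' b' x' y' hσ
    rw [← hS a' b' x' y', ← hS a b x y]
    apply Finset.sum_congr rfl; intro p _
    apply Finset.sum_congr rfl; intro q _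
    apply Finset.sum_congr rfl; intro z _
    apply Finset.sum_congr rfl; intro f _
    rw [hσ, symk_lo_perm]
  have s12 : ∀ a b x y, W a b x y = W b a x y := fun a b x y =>
    (key4 a b x y (Equiv.swap 0 1) b a x y
      (by funext i; fin_cases i <;> simp [Equiv.swap_apply_def])).symm
  have s23 : ∀ a b x y, W a b x y = W a x b y := fun a b x y =>
    (key4 a b x y (Equiv.swap 1 2) a x b y
      (by funext i; fin_cases i <;> simp [Equiv.swap_apply_def])).symm
  have s34 : ∀ a b x y, W a b x y = W a b y x := fun a b x y =>
    (key4 a b x y (Equiv.swap 2 3) a b y x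
      (by funext i; fin_cases i <;> simp [Equiv.swap_apply_def])).symm
  have CC := canonCC W s12 s23 s34
  intro n a x y
  have hLHS : (∑ b : Fin 2, ∑ z : Fin 2, ∑ f : Fin 2,
        symk ![b,z,f] ![a,x,y] * W n b z f)
      = ∑ u : Fin 3 → Fin 2, symk u ![a,x,y] * W n (u 0) (u 1) (u 2) := by
    rw [sum_fun3 (fun u => symk u ![a,x,y] * W n (u 0) (u 1) (u 2))]
    rfl
  rw [hLHS]
  have : ∀ u : Fin 3 → Fin 2, symk u ![a,x,y] * W n (u 0) (u 1) (u 2)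
      = symk u ![a,x,y] * W n a x y := by
    intro u
    by_cases h0 : symk u ![a,x,y] = 0
    · rw [h0, zero_mul, zero_mul]
    · congr 1
      apply CC
      have h3 : cnt u = cnt ![a,x,y] := cnt_eq_of_symk_ne_zero _ _ h0
      rw [cnt_cons, cnt_cons, show cnt ![u 0, u 1, u 2] = cnt u from by rw [eta3], h3]
  rw [Finset.sum_congr rfl (fun u _ => this u), ← Finset.sum_mul, symk_sum_up, one_mul]
lemma perm2_univ : (Finset.univ : Finset (Equiv.Perm (Fin 2))) = {1, Equiv.swap 0 1} := by decide

lemma symk2_eval (a b c d : Fin 2) : symk ![a, b] ![c, d] =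
    (kdelta a c * kdelta b d + kdelta a d * kdelta b c) / 2 := by
  unfold symk
  rw [perm2_univ, Finset.sum_insert (by decide), Finset.sum_singleton]
  rw [Fin.prod_univ_two, Fin.prod_univ_two]
  norm_num
  ring

noncomputable def qq (s t s' t' : Fin 2) : ℂ :=
  ∑ e : Fin 2, ∑ f : Fin 2, eps t e * eps t' f * symk ![s', f] ![s, e]

lemma P0_eval (x1 x2 x3 x4 y1 y2 y3 y4 : Fin 2) :
    PiProj (k := 0) ![] ![] (Sum.inr (x1,x2,x3,x4)) (Sum.inr (y1,y2,y3,y4))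
      = kdelta x1 y1 * kdelta x3 y3 * qq x2 x4 y2 y4 := by
  have : qq x2 x4 y2 y4 = ∑ e : Fin 2, ∑ f : Fin 2, eps x4 e * eps y4 f *
      symk (Fin.snoc (Fin.snoc ![] y2) f) (Fin.snoc (Fin.snoc ![] x2) e) := by
    unfold qq
    apply Finset.sum_congr rfl; intro e _
    apply Finset.sum_congr rfl; intro f _
    rw [snoc0, snoc0]
  rw [this]
  rfl

lemma qq_eval (s t s' t' : Fin 2) : qq s t s' t' =
    if s = 0 ∧ t = 1 ∧ s' = 0 ∧ t' = 1 then 1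
    else if s = 1 ∧ t = 0 ∧ s' = 1 ∧ t' = 0 then 1
    else if s = 0 ∧ t = 0 ∧ s' = 0 ∧ t' = 0 then 1/2
    else if s = 0 ∧ t = 0 ∧ s' = 1 ∧ t' = 1 then -(1/2)
    else if s = 1 ∧ t = 1 ∧ s' = 0 ∧ t' = 0 then -(1/2)
    else if s = 1 ∧ t = 1 ∧ s' = 1 ∧ t' = 1 then 1/2
    else 0 := by
  have h2v : ∀ v : Fin 2, v = 0 ∨ v = 1 := by decide
  unfold qq
  rcases h2v s with rfl | rfl <;> rcases h2v t with rfl | rfl <;>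
    rcases h2v s' with rfl | rfl <;> rcases h2v t' with rfl | rfl <;>
    simp [Fin.sum_univ_two, symk2_eval, eps, kdelta]

lemma amp_eval (f : Idx → ℂ) (x1 x2 x3 x4 : Fin 2) :
    amp f (Sum.inr (x1,x2,x3,x4)) =
      ∑ z1 : Fin 2, ∑ z2 : Fin 2, ∑ z3 : Fin 2, ∑ z4 : Fin 2,
        qq x1 x3 z1 z3 * qq x2 x4 z2 z4 * f (Sum.inr (z1,z2,z3,z4)) := by
  unfold amp
  rw [idx_sum]
  have hinl : ∀ α : Fin 4, (∑ C : Idx, PiProj (k := 0) ![] ![] (Sum.inr (x1,x2,x3,x4)) (Sum.inl α)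
      * PiProj (k := 0) ![] ![] (sharp (Sum.inl α)) (sharp C) * f C) = 0 := by
    intro α
    apply Finset.sum_eq_zero; intro C _
    rw [PiProj_inl_right]
    ring
  rw [Finset.sum_eq_zero (fun α _ => hinl α), zero_add]
  have hC : ∀ y1 y2 y3 y4 : Fin 2,
      (∑ C : Idx, PiProj (k := 0) ![] ![] (Sum.inr (x1,x2,x3,x4)) (Sum.inr (y1,y2,y3,y4))
        * PiProj (k := 0) ![] ![] (sharp (Sum.inr (y1,y2,y3,y4))) (sharp C) * f C)
      = ∑ z1 : Fin 2, ∑ z2 : Fin 2, ∑ z3 : Fin 2, ∑ z4 : Fin 2,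
          (kdelta x1 y1 * kdelta x3 y3 * qq x2 x4 y2 y4)
          * (kdelta y2 z2 * kdelta y4 z4 * qq y1 y3 z1 z3) * f (Sum.inr (z1,z2,z3,z4)) := by
    intro y1 y2 y3 y4
    rw [idx_sum]
    have h0 : ∀ α : Fin 4, PiProj (k := 0) ![] ![] (Sum.inr (x1,x2,x3,x4)) (Sum.inr (y1,y2,y3,y4))
        * PiProj (k := 0) ![] ![] (sharp (Sum.inr (y1,y2,y3,y4))) (sharp (Sum.inl α)) * f (Sum.inl α) = 0 := by
      intro α
      show _ * PiProj (k := 0) ![] ![] _ (Sum.inl α) * _ = 0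
      rw [PiProj_inl_right]
      ring
    rw [Finset.sum_eq_zero (fun α _ => h0 α), zero_add]
    apply Finset.sum_congr rfl; intro z1 _
    apply Finset.sum_congr rfl; intro z2 _
    apply Finset.sum_congr rfl; intro z3 _
    apply Finset.sum_congr rfl; intro z4 _
    rw [show sharp (Sum.inr (y1,y2,y3,y4)) = Sum.inr (y2,y1,y4,y3) from rfl,
        show sharp (Sum.inr (z1,z2,z3,z4)) = Sum.inr (z2,z1,z4,z3) from rfl,
        P0_eval, P0_eval]
  rw [Finset.sum_congr rfl (fun y1 _ => Finset.sum_congr rfl (fun y2 _ =>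
    Finset.sum_congr rfl (fun y3 _ => Finset.sum_congr rfl (fun y4 _ => hC y1 y2 y3 y4))))]
  -- now contract the kdeltas
  have h2v : ∀ v : Fin 2, v = 0 ∨ v = 1 := by decide
  rcases h2v x1 with rfl | rfl <;> rcases h2v x3 with rfl | rfl <;>
    simp [Fin.sum_univ_two, kdelta] <;> ring

lemma u_vanish (u : Idx → ℂ)
    (hE1 : ∀ c1 c3 : Fin 2, u (Sum.inr (c1,0,c3,0)) = - u (Sum.inr (c1,1,c3,1)))
    (hamp : ∀ A, amp u A = 0)
    (hreal : ∀ A, (starRingEnd ℂ) (u A) = u (sharp A))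
    (hinl : ∀ α, u (Sum.inl α) = 0) :
    ∀ A, u A = 0 := by
  have geteq : ∀ x1 x2 x3 x4 : Fin 2,
      (∑ z1 : Fin 2, ∑ z2 : Fin 2, ∑ z3 : Fin 2, ∑ z4 : Fin 2,
        qq x1 x3 z1 z3 * qq x2 x4 z2 z4 * u (Sum.inr (z1,z2,z3,z4))) = 0 := by
    intro x1 x2 x3 x4
    rw [← amp_eval]
    exact hamp _
  have expand : ∀ x1 x2 x3 x4 : Fin 2,
      (∑ z1 : Fin 2, ∑ z2 : Fin 2, ∑ z3 : Fin 2, ∑ z4 : Fin 2,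
        qq x1 x3 z1 z3 * qq x2 x4 z2 z4 * u (Sum.inr (z1,z2,z3,z4)))
      = ∑ z1 : Fin 2, ∑ z2 : Fin 2, ∑ z3 : Fin 2, ∑ z4 : Fin 2,
        qq x1 x3 z1 z3 * qq x2 x4 z2 z4 * u (Sum.inr (z1,z2,z3,z4)) := fun _ _ _ _ => rfl
  have q1 := geteq 0 0 1 1
  have q2 := geteq 0 1 1 0
  have q3 := geteq 0 0 1 0
  have q4 := geteq 1 0 0 1
  have q5 := geteq 1 1 0 0
  have q6 := geteq 1 0 0 0
  have q7 := geteq 0 0 0 1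
  have q8 := geteq 0 1 0 0
  have q9 := geteq 0 0 0 0
  simp only [qq_eval, Fin.sum_univ_two] at q1 q2 q3 q4 q5 q6 q7 q8 q9
  norm_num at q1 q2 q3 q4 q5 q6 q7 q8 q9
  have e0011 : u (Sum.inr (0,0,1,1)) = 0 := q1
  have e0110 : u (Sum.inr (0,1,1,0)) = 0 := q2
  have q3' : 1/2 * u (Sum.inr (0,0,1,0)) + -(1/2 * u (Sum.inr (0,1,1,1))) = 0 := q3
  have hE01 := hE1 0 1
  have e0010 : u (Sum.inr (0,0,1,0)) = 0 := by linear_combination 1/2 * hE01 + q3'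
  have e0111 : u (Sum.inr (0,1,1,1)) = 0 := by linear_combination 1/2 * hE01 - q3'
  have e1001 : u (Sum.inr (1,0,0,1)) = 0 := q4
  have e1100 : u (Sum.inr (1,1,0,0)) = 0 := q5
  have q6' : 1/2 * u (Sum.inr (1,0,0,0)) + -(1/2 * u (Sum.inr (1,1,0,1))) = 0 := q6
  have hE10 := hE1 1 0
  have e1000 : u (Sum.inr (1,0,0,0)) = 0 := by linear_combination 1/2 * hE10 + q6'
  have e1101 : u (Sum.inr (1,1,0,1)) = 0 := by linear_combination 1/2 * hE10 - q6'
  have q7' : 1/2 * u (Sum.inr (0,0,0,1)) + -(1/2 * u (Sum.inr (1,0,1,1))) = 0 := q7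
  have q8' : 1/2 * u (Sum.inr (0,1,0,0)) + -(1/2 * u (Sum.inr (1,1,1,0))) = 0 := q8
  have q9' : 1/4 * u (Sum.inr (0,0,0,0)) + -(1/4 * u (Sum.inr (0,1,0,1))) +
      (-(1/4 * u (Sum.inr (1,0,1,0))) + 1/4 * u (Sum.inr (1,1,1,1))) = 0 := q9
  -- reality
  have r1 : (starRingEnd ℂ) (u (Sum.inr (0,0,0,1))) = u (Sum.inr (0,0,1,0)) := hreal (Sum.inr (0,0,0,1))
  have e0001 : u (Sum.inr (0,0,0,1)) = 0 := by
    have : (starRingEnd ℂ) (u (Sum.inr (0,0,0,1))) = 0 := by rw [r1, e0010]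
    exact star_eq_zero.mp this
  have e1011 : u (Sum.inr (1,0,1,1)) = 0 := by linear_combination e0001 - 2 * q7'
  have r2 : (starRingEnd ℂ) (u (Sum.inr (0,1,0,0))) = u (Sum.inr (1,0,0,0)) := hreal (Sum.inr (0,1,0,0))
  have e0100 : u (Sum.inr (0,1,0,0)) = 0 := by
    have : (starRingEnd ℂ) (u (Sum.inr (0,1,0,0))) = 0 := by rw [r2, e1000]
    exact star_eq_zero.mp this
  have e1110 : u (Sum.inr (1,1,1,0)) = 0 := by linear_combination e0100 - 2 * q8'
  have r3 : (starRingEnd ℂ) (u (Sum.inr (0,0,0,0))) = u (Sum.inr (0,0,0,0)) := hreal (Sum.inr (0,0,0,0))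
  have r4 : (starRingEnd ℂ) (u (Sum.inr (1,0,1,0))) = u (Sum.inr (0,1,0,1)) := hreal (Sum.inr (1,0,1,0))
  have hE00 := hE1 0 0
  have hE11 := hE1 1 1
  -- u0000 = u1010
  have h00eq : u (Sum.inr (0,0,0,0)) = u (Sum.inr (1,0,1,0)) := by
    linear_combination 2 * q9' + 1/2 * hE00 - 1/2 * hE11
  have e0000 : u (Sum.inr (0,0,0,0)) = 0 := by
    have hc : u (Sum.inr (0,0,0,0)) = - u (Sum.inr (0,0,0,0)) := by
      calc u (Sum.inr (0,0,0,0)) = (starRingEnd ℂ) (u (Sum.inr (0,0,0,0))) := r3.symm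
        _ = (starRingEnd ℂ) (u (Sum.inr (1,0,1,0))) := by rw [h00eq]
        _ = u (Sum.inr (0,1,0,1)) := r4
        _ = - u (Sum.inr (0,0,0,0)) := by linear_combination hE00
    linear_combination 1/2 * hc
  have e1010 : u (Sum.inr (1,0,1,0)) = 0 := by rw [← h00eq]; exact e0000
  have e0101 : u (Sum.inr (0,1,0,1)) = 0 := by linear_combination hE00 - e0000
  have e1111 : u (Sum.inr (1,1,1,1)) = 0 := by linear_combination hE11 - e1010
  have h2v : ∀ v : Fin 2, v = 0 ∨ v = 1 := by decide
  intro A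
  match A with
  | Sum.inl α => exact hinl α
  | Sum.inr (a, b, c, d) =>
    rcases h2v a with rfl | rfl <;> rcases h2v b with rfl | rfl <;>
      rcases h2v c with rfl | rfl <;> rcases h2v d with rfl | rfl <;>
      assumption
noncomputable def Wb (v : Fin 2 → Idx → ℂ) (c1 c3 : Fin 2) (b x y : Fin 2) : ℂ :=
  sg y * v b (Sum.inr (c1, x, c3, bar y))

noncomputable def Wb2 (w : Fin 2 → Fin 2 → Idx → ℂ) (c1 c3 : Fin 2) (p q x y : Fin 2) : ℂ :=
  Wb (w p) c1 c3 q x y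

lemma contract1 (v : Fin 2 → Idx → ℂ) (a c1 c2 c3 c4 : Fin 2) :
    (∑ b : Fin 2, ∑ B : Idx, PiProj ![a] ![b] (Sum.inr (c1,c2,c3,c4)) B * v b B)
    = - sg c4 * ∑ b : Fin 2, ∑ z : Fin 2, ∑ f : Fin 2,
        symk ![b,z,f] ![a,c2,bar c4] * Wb v c1 c3 b z f := by
  have hb : ∀ b : Fin 2, (∑ B : Idx, PiProj ![a] ![b] (Sum.inr (c1,c2,c3,c4)) B * v b B)
      = sg c4 * ∑ z : Fin 2, ∑ f : Fin 2,
          (- sg f) * symk ![b,z,f] ![a,c2,bar c4] * v b (Sum.inr (c1,z,c3,bar f)) := by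
    intro b
    rw [PiProj_contract ![a] ![b] c1 c2 c3 c4 (v b)]
    congr 1
  rw [Finset.sum_congr rfl (fun b _ => hb b)]
  simp only [Finset.mul_sum]
  apply Finset.sum_congr rfl; intro b _
  apply Finset.sum_congr rfl; intro z _
  apply Finset.sum_congr rfl; intro f _
  unfold Wb
  ring

lemma contract2 (w : Fin 2 → Fin 2 → Idx → ℂ) (a b c1 c2 c3 c4 : Fin 2) :
    (∑ p : Fin 2, ∑ q : Fin 2, ∑ B : Idx,
        PiProj ![a,b] ![p,q] (Sum.inr (c1,c2,c3,c4)) B * w p q B)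
    = - sg c4 * ∑ p : Fin 2, ∑ q : Fin 2, ∑ z : Fin 2, ∑ f : Fin 2,
        symk ![p,q,z,f] ![a,b,c2,bar c4] * Wb2 w c1 c3 p q z f := by
  have hb : ∀ p q : Fin 2, (∑ B : Idx, PiProj ![a,b] ![p,q] (Sum.inr (c1,c2,c3,c4)) B * w p q B)
      = sg c4 * ∑ z : Fin 2, ∑ f : Fin 2,
          (- sg f) * symk ![p,q,z,f] ![a,b,c2,bar c4] * w p q (Sum.inr (c1,z,c3,bar f)) := by
    intro p q
    rw [PiProj_contract ![a,b] ![p,q] c1 c2 c3 c4 (w p q)]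
    congr 1
  rw [Finset.sum_congr rfl (fun p _ => Finset.sum_congr rfl (fun q _ => hb p q))]
  simp only [Finset.mul_sum]
  apply Finset.sum_congr rfl; intro p _
  apply Finset.sum_congr rfl; intro q _
  apply Finset.sum_congr rfl; intro z _
  apply Finset.sum_congr rfl; intro f _
  unfold Wb2 Wb
  ring

lemma Mfix_iff (v : Fin 2 → Idx → ℂ) :
    (∀ (a : Fin 2) (A : Idx), (∑ b : Fin 2, ∑ B : Idx, PiProj ![a] ![b] A B * v b B) = v a A)
    ↔ ((∀ (a : Fin 2) (α : Fin 4), v a (Sum.inl α) = 0) ∧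
        ∀ c1 c3 a x y : Fin 2,
          (∑ b : Fin 2, ∑ z : Fin 2, ∑ f : Fin 2,
            symk ![b,z,f] ![a,x,y] * Wb v c1 c3 b z f) = Wb v c1 c3 a x y) := by
  constructor
  · intro hM
    constructor
    · intro a α
      rw [← hM a (Sum.inl α)]
      apply Finset.sum_eq_zero; intro b _
      apply Finset.sum_eq_zero; intro B _
      rw [PiProj_inl_left, zero_mul]
    · intro c1 c3 a x y
      have h := hM a (Sum.inr (c1, x, c3, bar y))
      rw [contract1] at h
      rw [bar_bar] at h
      have hsg := sg_mul_sg y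
      have hsb := sg_bar y
      have hWdef : Wb v c1 c3 a x y = sg y * v a (Sum.inr (c1, x, c3, bar y)) := rfl
      rw [hWdef]
      set Sig := ∑ b : Fin 2, ∑ z : Fin 2, ∑ f : Fin 2,
        symk ![b,z,f] ![a,x,y] * Wb v c1 c3 b z f with hSigdef
      linear_combination sg y * h + (sg y * Sig) * hsb + (- Sig) * hsg
  · rintro ⟨hinl, hW⟩ a A
    match A with
    | Sum.inl α =>
      rw [hinl a α]
      apply Finset.sum_eq_zero; intro b _
      apply Finset.sum_eq_zero; intro B _
      rw [PiProj_inl_left, zero_mul]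
    | Sum.inr (c1, c2, c3, c4) =>
      rw [contract1, hW c1 c3 a c2 (bar c4)]
      have hWdef : Wb v c1 c3 a c2 (bar c4)
          = sg (bar c4) * v a (Sum.inr (c1, c2, c3, bar (bar c4))) := rfl
      rw [hWdef, bar_bar]
      have hsg := sg_mul_sg c4
      have hsb := sg_bar c4
      linear_combination (- sg c4 * v a (Sum.inr (c1, c2, c3, c4))) * hsb
        + v a (Sum.inr (c1, c2, c3, c4)) * hsg

lemma N2_iff (w : Fin 2 → Fin 2 → Idx → ℂ) :
    (∀ (a b : Fin 2) (A : Idx),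
        (∑ c : Fin 2, ∑ d : Fin 2, ∑ B : Idx, PiProj ![a, b] ![c, d] A B * w c d B) = w a b A)
    ↔ ((∀ (a b : Fin 2) (α : Fin 4), w a b (Sum.inl α) = 0) ∧
        ∀ c1 c3 a b x y : Fin 2,
          (∑ p : Fin 2, ∑ q : Fin 2, ∑ z : Fin 2, ∑ f : Fin 2,
            symk ![p,q,z,f] ![a,b,x,y] * Wb2 w c1 c3 p q z f) = Wb2 w c1 c3 a b x y) := by
  constructor
  · intro hM
    constructor
    · intro a b α
      rw [← hM a b (Sum.inl α)]
      apply Finset.sum_eq_zero; intro p _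
      apply Finset.sum_eq_zero; intro q _
      apply Finset.sum_eq_zero; intro B _
      rw [PiProj_inl_left, zero_mul]
    · intro c1 c3 a b x y
      have h := hM a b (Sum.inr (c1, x, c3, bar y))
      rw [contract2] at h
      rw [bar_bar] at h
      have hsg := sg_mul_sg y
      have hsb := sg_bar y
      have hWdef : Wb2 w c1 c3 a b x y = sg y * w a b (Sum.inr (c1, x, c3, bar y)) := rfl
      rw [hWdef]
      set Sig := ∑ p : Fin 2, ∑ q : Fin 2, ∑ z : Fin 2, ∑ f : Fin 2,
        symk ![p,q,z,f] ![a,b,x,y] * Wb2 w c1 c3 p q z f with hSigdef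
      linear_combination sg y * h + (sg y * Sig) * hsb + (- Sig) * hsg
  · rintro ⟨hinl, hW⟩ a b A
    match A with
    | Sum.inl α =>
      rw [hinl a b α]
      apply Finset.sum_eq_zero; intro p _
      apply Finset.sum_eq_zero; intro q _
      apply Finset.sum_eq_zero; intro B _
      rw [PiProj_inl_left, zero_mul]
    | Sum.inr (c1, c2, c3, c4) =>
      rw [contract2, hW c1 c3 a b c2 (bar c4)]
      have hWdef : Wb2 w c1 c3 a b c2 (bar c4)
          = sg (bar c4) * w a b (Sum.inr (c1, c2, c3, bar (bar c4))) := rfl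
      rw [hWdef, bar_bar]
      have hsg := sg_mul_sg c4
      have hsb := sg_bar c4
      linear_combination (- sg c4 * w a b (Sum.inr (c1, c2, c3, c4))) * hsb
        + w a b (Sum.inr (c1, c2, c3, c4)) * hsg

lemma sym_last (W : Fin 2 → Fin 2 → Fin 2 → Fin 2 → ℂ)
    (h1 : ∀ n a x y, (∑ b : Fin 2, ∑ z : Fin 2, ∑ f : Fin 2,
        symk ![b,z,f] ![a,x,y] * W n b z f) = W n a x y) :
    ∀ n a x y, W n a x y = W n a y x := by
  intro n a x y
  rw [← h1 n a x y, ← h1 n a y x]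
  apply Finset.sum_congr rfl; intro b _
  apply Finset.sum_congr rfl; intro z _
  apply Finset.sum_congr rfl; intro f _
  congr 1
  have : (![a,y,x] : Fin 3 → Fin 2) = ![a,x,y] ∘ (Equiv.swap 1 2) := by
    funext i; fin_cases i <;> simp [Equiv.swap_apply_def]
  rw [this, symk_lo_perm]

lemma amp_lin (f g : Idx → ℂ) (c : ℂ) (A : Idx) :
    amp (fun C => f C + c * g C) A = amp f A + c * amp g A := by
  unfold amp
  simp only [Finset.mul_sum, ← Finset.sum_add_distrib]
  apply Finset.sum_congr rfl; intro B _
  apply Finset.sum_congr rfl; intro C _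
  ring

/-- (G6): `conj(w_{ma}^A) t^{mn} G^{ab}{}_{AB} w_{nb}^B ≥ 0` for `w` with
`w_{ab}^{&A} = 0` and `conj(ε^{ab} w_{ab}^A) = ε^{ab} w_{ab}^{♯A}`, with equality
if and only if `w ∈ Weyl`, given (G1)–(G3) and `t` Hermitian positive definite. -/
theorem gauge_G6
    (G : Fin 2 → Fin 2 → Idx → Idx → ℂ)
    -- (G1): G^{ab}{}_{A&B} = 0 and conj(G^{ba}{}_{BA}) = G^{ab}{}_{AB}
    (hG1a : ∀ (a b : Fin 2) (A B : Idx),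
      (∑ X : Idx, ∑ Y : Idx, G a b A X * PiProj (k := 0) ![] ![] X Y
        * PiProj (k := 0) ![] ![] (sharp Y) (sharp B)) = 0)
    (hG1b : ∀ (a b : Fin 2) (A B : Idx), starRingEnd ℂ (G b a B A) = G a b A B)
    -- (G2): G^{ab}{}_{AB} Π_b^{Bc}{}_C = 0
    (hG2 : ∀ (a c : Fin 2) (A C : Idx),
      (∑ b : Fin 2, ∑ B : Idx, G a b A B * PiProj ![b] ![c] B C) = 0)
    -- (G3): positivity, with the stated equality case
    (hG3pos : ∀ v : Fin 2 → Idx → ℂ,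
      0 ≤ (∑ a : Fin 2, ∑ b : Fin 2, ∑ A : Idx, ∑ B : Idx,
        starRingEnd ℂ (v a A) * G a b A B * v b B).re)
    (hG3eq : ∀ v : Fin 2 → Idx → ℂ, (∀ (b : Fin 2) (B : Idx), amp (v b) B = 0) →
      ((∑ a : Fin 2, ∑ b : Fin 2, ∑ A : Idx, ∑ B : Idx,
          starRingEnd ℂ (v a A) * G a b A B * v b B) = 0 ↔
        ∀ (a : Fin 2) (A : Idx),
          (∑ b : Fin 2, ∑ B : Idx, PiProj ![a] ![b] A B * v b B) = v a A))
    -- t^{mn}: Hermitian and positive definite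
    (t : Matrix (Fin 2) (Fin 2) ℂ)
    (htherm : ∀ m n : Fin 2, starRingEnd ℂ (t n m) = t m n)
    (htpos : ∀ s : Fin 2 → ℂ, s ≠ 0 →
      0 < (∑ m : Fin 2, ∑ n : Fin 2, starRingEnd ℂ (s m) * t m n * s n).re)
    (w : Fin 2 → Fin 2 → Idx → ℂ)
    (hwamp : ∀ (a b : Fin 2) (A : Idx), amp (w a b) A = 0)
    (hwreal : ∀ A : Idx,
      starRingEnd ℂ (∑ a : Fin 2, ∑ b : Fin 2, eps a b * w a b A)
        = ∑ a : Fin 2, ∑ b : Fin 2, eps a b * w a b (sharp A)) :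
    0 ≤ ((∑ m : Fin 2, ∑ n : Fin 2, ∑ a : Fin 2, ∑ b : Fin 2, ∑ A : Idx, ∑ B : Idx,
      starRingEnd ℂ (w m a A) * t m n * G a b A B * w n b B)).re ∧
    (((∑ m : Fin 2, ∑ n : Fin 2, ∑ a : Fin 2, ∑ b : Fin 2, ∑ A : Idx, ∑ B : Idx,
      starRingEnd ℂ (w m a A) * t m n * G a b A B * w n b B)) = 0 ↔
      ((∀ (a b : Fin 2) (A : Idx),
          (∑ c : Fin 2, ∑ d : Fin 2, ∑ B : Idx, PiProj ![a, b] ![c, d] A B * w c d B)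
            = w a b A) ∧
        ∀ (a b : Fin 2) (A : Idx), amp (w a b) A = 0)) := by
  classical
  set S : (Fin 2 → Idx → ℂ) → ℂ := fun v => ∑ a : Fin 2, ∑ b : Fin 2, ∑ A : Idx, ∑ B : Idx,
      starRingEnd ℂ (v a A) * G a b A B * v b B with hSdef
  have hconjα : starRingEnd ℂ (t 0 0) = t 0 0 := htherm 0 0
  have hαre : 0 < (t 0 0).re := by
    have hne : (![1, 0] : Fin 2 → ℂ) ≠ 0 := by
      intro h
      have := congrFun h 0
      simp at this
    have := htpos ![1, 0] hne
    simpa [Fin.sum_univ_two] using this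
  have hαne : t 0 0 ≠ 0 := by
    intro h
    rw [h] at hαre
    simp at hαre
  have ht10 : t 1 0 = starRingEnd ℂ (t 0 1) := by
    calc t 1 0 = starRingEnd ℂ (starRingEnd ℂ (t 1 0)) := (Complex.conj_conj _).symm
      _ = starRingEnd ℂ (t 0 1) := by rw [htherm 0 1]
  have hconjt11 : starRingEnd ℂ (t 1 1) = t 1 1 := htherm 1 1
  set κ : ℂ := t 1 1 - starRingEnd ℂ (t 0 1) * t 0 1 / t 0 0 with hκdef
  have hconjκ : starRingEnd ℂ κ = κ := by
    rw [hκdef]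
    simp only [map_sub, map_div₀, map_mul, Complex.conj_conj, hconjt11, hconjα]
    ring
  have hκre : 0 < κ.re := by
    have hne : (![-(t 0 1), t 0 0] : Fin 2 → ℂ) ≠ 0 := by
      intro h
      exact hαne (by simpa using congrFun h 1)
    have hp := htpos ![-(t 0 1), t 0 0] hne
    have hexp : (∑ m : Fin 2, ∑ n : Fin 2,
        starRingEnd ℂ ((![-(t 0 1), t 0 0] : Fin 2 → ℂ) m) * t m n
          * (![-(t 0 1), t 0 0] : Fin 2 → ℂ) n)
        = t 0 0 * t 0 0 * κ := by
      simp only [Fin.sum_univ_two, Matrix.cons_val_zero, Matrix.cons_val_one,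
        Matrix.head_cons, map_neg]
      rw [ht10]
      have hκα : κ * t 0 0 = t 1 1 * t 0 0 - starRingEnd ℂ (t 0 1) * t 0 1 := by
        rw [hκdef]
        field_simp
      linear_combination (-(t 0 0)) * hκα
        + (t 1 1 * t 0 0 - starRingEnd ℂ (t 0 1) * t 0 1) * hconjα
    rw [hexp] at hp
    have him : (t 0 0).im = 0 := Complex.conj_eq_iff_im.mp hconjα
    have hre : (t 0 0 * t 0 0 * κ).re = (t 0 0).re * (t 0 0).re * κ.re := by
      rw [Complex.mul_re, Complex.mul_re, Complex.mul_im, him]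
      ring
    rw [hre] at hp
    nlinarith [hαre]
  have hκα : κ * t 0 0 = t 1 1 * t 0 0 - starRingEnd ℂ (t 0 1) * t 0 1 := by
    rw [hκdef]
    field_simp
  set z : Fin 2 → Idx → ℂ := fun a A => w 0 a A + (t 0 1 / t 0 0) * w 1 a A with hzdef
  have hsplit : ∀ (a : Fin 2) (A : Idx), (∑ b : Fin 2, ∑ B : Idx, PiProj ![a] ![b] A B * z b B)
      = (∑ b : Fin 2, ∑ B : Idx, PiProj ![a] ![b] A B * w 0 b B)
        + (t 0 1 / t 0 0) * (∑ b : Fin 2, ∑ B : Idx, PiProj ![a] ![b] A B * w 1 b B) := by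
    intro a A
    simp only [Finset.mul_sum, ← Finset.sum_add_distrib]
    apply Finset.sum_congr rfl; intro b _
    apply Finset.sum_congr rfl; intro B _
    have hzb : z b B = w 0 b B + (t 0 1 / t 0 0) * w 1 b B := rfl
    rw [hzb]
    ring
  have hQ : (∑ m : Fin 2, ∑ n : Fin 2, ∑ a : Fin 2, ∑ b : Fin 2, ∑ A : Idx, ∑ B : Idx,
      starRingEnd ℂ (w m a A) * t m n * G a b A B * w n b B)
      = t 0 0 * S z + κ * S (w 1) := by
    simp only [hSdef, hzdef, hκdef]
    simp only [Fin.sum_univ_two, ht10]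
    simp only [map_add, map_mul, map_div₀, hconjα, Finset.mul_sum, mul_add, add_mul,
      ← Finset.sum_add_distrib]
    apply Finset.sum_congr rfl; intro A _
    apply Finset.sum_congr rfl; intro B _
    field_simp
    ring
  have him0 : (t 0 0).im = 0 := Complex.conj_eq_iff_im.mp hconjα
  have hκim : κ.im = 0 := Complex.conj_eq_iff_im.mp hconjκ
  have hSreal : ∀ v, starRingEnd ℂ (S v) = S v := by
    intro v
    simp only [hSdef]
    simp only [map_sum, map_mul, Complex.conj_conj]
    have hG' : ∀ a b A B, starRingEnd ℂ (G a b A B) = G b a B A := fun a b A B => hG1b b a B A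
    simp only [hG']
    rw [Finset.sum_comm]
    apply Finset.sum_congr rfl; intro b _
    apply Finset.sum_congr rfl; intro a _
    rw [Finset.sum_comm]
    apply Finset.sum_congr rfl; intro B _
    apply Finset.sum_congr rfl; intro A _
    ring
  have hQre : (∑ m : Fin 2, ∑ n : Fin 2, ∑ a : Fin 2, ∑ b : Fin 2, ∑ A : Idx, ∑ B : Idx,
      starRingEnd ℂ (w m a A) * t m n * G a b A B * w n b B).re
      = (t 0 0).re * (S z).re + κ.re * (S (w 1)).re := by
    rw [hQ, Complex.add_re, Complex.mul_re, Complex.mul_re, him0, hκim]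
    ring
  have hpos1 : 0 ≤ (S z).re := hG3pos z
  have hpos2 : 0 ≤ (S (w 1)).re := hG3pos (w 1)
  have hiff1 : (∑ m : Fin 2, ∑ n : Fin 2, ∑ a : Fin 2, ∑ b : Fin 2, ∑ A : Idx, ∑ B : Idx,
      starRingEnd ℂ (w m a A) * t m n * G a b A B * w n b B) = 0
      ↔ (S z = 0 ∧ S (w 1) = 0) := by
    constructor
    · intro h0
      have hre0 : ((∑ m : Fin 2, ∑ n : Fin 2, ∑ a : Fin 2, ∑ b : Fin 2, ∑ A : Idx, ∑ B : Idx,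
          starRingEnd ℂ (w m a A) * t m n * G a b A B * w n b B)).re = 0 := by
        rw [h0]; simp
      rw [hQre] at hre0
      have hz0 : (S z).re = 0 := by nlinarith
      have hw10 : (S (w 1)).re = 0 := by nlinarith
      constructor
      · exact Complex.ext hz0 (Complex.conj_eq_iff_im.mp (hSreal z))
      · exact Complex.ext hw10 (Complex.conj_eq_iff_im.mp (hSreal (w 1)))
    · rintro ⟨h1, h2⟩
      rw [hQ, h1, h2]
      ring
  have hampz : ∀ (b : Fin 2) (B : Idx), amp (z b) B = 0 := by
    intro b B
    have hf : z b = fun C => w 0 b C + (t 0 1 / t 0 0) * w 1 b C := rfl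
    rw [hf, amp_lin, hwamp 0 b B, hwamp 1 b B]
    ring
  have hiffz := hG3eq z hampz
  have hiffw1 := hG3eq (w 1) (fun b B => hwamp 1 b B)
  have h2v : ∀ v : Fin 2, v = 0 ∨ v = 1 := by decide
  constructor
  · rw [hQre]
    have := mul_nonneg hαre.le hpos1
    have := mul_nonneg hκre.le hpos2
    linarith
  constructor
  · intro h0
    obtain ⟨hSz, hSw1⟩ := hiff1.mp h0
    have hMz := hiffz.mp hSz
    have hMw1 := hiffw1.mp hSw1
    have hMw0 : ∀ (a : Fin 2) (A : Idx),
        (∑ b : Fin 2, ∑ B : Idx, PiProj ![a] ![b] A B * w 0 b B) = w 0 a A := by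
      intro a A
      have h1 := hMz a A
      rw [hsplit, hMw1 a A] at h1
      have h2 : z a A = w 0 a A + (t 0 1 / t 0 0) * w 1 a A := rfl
      rw [h2] at h1
      linear_combination h1
    have hMn : ∀ (n a : Fin 2) (A : Idx),
        (∑ b : Fin 2, ∑ B : Idx, PiProj ![a] ![b] A B * w n b B) = w n a A := by
      intro n
      rcases h2v n with rfl | rfl
      exacts [hMw0, hMw1]
    have hMiff := fun n => (Mfix_iff (w n)).mp (hMn n)
    have hinlw : ∀ (n a : Fin 2) (α : Fin 4), w n a (Sum.inl α) = 0 := fun n => (hMiff n).1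
    have h1lev : ∀ c1 c3 n a x y : Fin 2,
        (∑ b : Fin 2, ∑ z' : Fin 2, ∑ f : Fin 2,
          symk ![b,z',f] ![a,x,y] * Wb2 w c1 c3 n b z' f) = Wb2 w c1 c3 n a x y := by
      intro c1 c3 n a x y
      exact (hMiff n).2 c1 c3 a x y
    have hE1w : ∀ (n a c1 c3 : Fin 2),
        w n a (Sum.inr (c1,0,c3,0)) = - w n a (Sum.inr (c1,1,c3,1)) := by
      intro n a c1 c3
      have hs := sym_last (Wb2 w c1 c3) (fun p a' x y => h1lev c1 c3 p a' x y) n a 0 1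
      have e1 : Wb2 w c1 c3 n a 0 1 = sg 1 * w n a (Sum.inr (c1, 0, c3, bar 1)) := rfl
      have e2 : Wb2 w c1 c3 n a 1 0 = sg 0 * w n a (Sum.inr (c1, 1, c3, bar 0)) := rfl
      rw [e1, e2] at hs
      rw [show bar 1 = 0 by rfl, show bar 0 = 1 by rfl, show sg 1 = -1 by rfl,
        show sg 0 = 1 by rfl] at hs
      linear_combination - hs
    set u : Idx → ℂ := fun A => ∑ a : Fin 2, ∑ b : Fin 2, eps a b * w a b A with hudef
    have hu_eq : ∀ A, u A = w 0 1 A - w 1 0 A := by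
      intro A
      simp only [hudef]
      rw [Fin.sum_univ_two, Fin.sum_univ_two, Fin.sum_univ_two]
      rw [show eps 0 0 = 0 by rfl, show eps 0 1 = 1 by norm_num [eps],
        show eps 1 0 = -1 by norm_num [eps], show eps 1 1 = 0 by rfl]
      ring
    have hE1u : ∀ c1 c3 : Fin 2, u (Sum.inr (c1,0,c3,0)) = - u (Sum.inr (c1,1,c3,1)) := by
      intro c1 c3
      rw [hu_eq, hu_eq]
      linear_combination hE1w 0 1 c1 c3 - hE1w 1 0 c1 c3
    have hampu : ∀ A, amp u A = 0 := by
      intro A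
      have hfun : u = fun C => w 0 1 C + (-1 : ℂ) * w 1 0 C := by
        funext C
        rw [hu_eq]
        ring
      rw [hfun, amp_lin, hwamp, hwamp]
      ring
    have hrealu : ∀ A, starRingEnd ℂ (u A) = u (sharp A) := fun A => hwreal A
    have huinl : ∀ α, u (Sum.inl α) = 0 := by
      intro α
      rw [hu_eq, hinlw 0 1 α, hinlw 1 0 α]
      ring
    have hu0 : ∀ A, u A = 0 := u_vanish u hE1u hampu hrealu huinl
    have hweq : ∀ A, w 0 1 A = w 1 0 A := by
      intro A
      have h := hu0 A
      rw [hu_eq] at h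
      linear_combination h
    have h4lev : ∀ c1 c3 : Fin 2, ∀ a b x y : Fin 2,
        (∑ p : Fin 2, ∑ q : Fin 2, ∑ z' : Fin 2, ∑ f : Fin 2,
          symk ![p,q,z',f] ![a,b,x,y] * Wb2 w c1 c3 p q z' f) = Wb2 w c1 c3 a b x y := by
      intro c1 c3
      apply core4 (Wb2 w c1 c3) (fun n a x y => h1lev c1 c3 n a x y)
      intro x y
      show sg y * w 0 1 _ = sg y * w 1 0 _
      rw [hweq]
    exact ⟨(N2_iff w).mpr ⟨fun a b α => hinlw a b α,
      fun c1 c3 a b x y => h4lev c1 c3 a b x y⟩, hwamp⟩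
  · rintro ⟨hP2, -⟩
    obtain ⟨hinlw', h4lev'⟩ := (N2_iff w).mp hP2
    have h1lev' := fun c1 c3 => core4' (Wb2 w c1 c3) (h4lev' c1 c3)
    have hMn : ∀ (n a : Fin 2) (A : Idx),
        (∑ b : Fin 2, ∑ B : Idx, PiProj ![a] ![b] A B * w n b B) = w n a A := by
      intro n
      exact (Mfix_iff (w n)).mpr
        ⟨fun a α => hinlw' n a α, fun c1 c3 a x y => h1lev' c1 c3 n a x y⟩
    have hMz : ∀ (a : Fin 2) (A : Idx),
        (∑ b : Fin 2, ∑ B : Idx, PiProj ![a] ![b] A B * z b B) = z a A := by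
      intro a A
      rw [hsplit, hMn 0 a A, hMn 1 a A]
    exact hiff1.mpr ⟨hiffz.mpr hMz, hiffw1.mpr (hMn 1)⟩
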